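/- For each i ∈ I there exists some μ ∈ Ψ such that (μ, α_i^∨) ≠ 0; consequently ±α_i = s_i(μ) − μ ∈ ℤΨ for such μ, and hence Φ ⊆ ℤΨ. -/

import Mathlib

/-! If some `αᵢ` were orthogonal to all of `Ψ`, split the simple roots into those orthogonal to
all of `Ψ` and the others. No edge of the Dynkin diagram joins the two classes: if
`(μ, αⱼ^∨) ≠ 0` for some `μ ∈ Ψ`, then `(sⱼ μ, αᵢ^∨) = -(μ, αⱼ^∨)(αⱼ, αᵢ^∨)` must vanish because
`sⱼ μ ∈ Ψ`. Both classes are nonempty, as `Ψ ∌ 0` and the simple roots span `E`. No root has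
coordinates in both classes: reflecting a counterexample of minimal height in a suitable simple
root produces a lower one. So `Φ` would be reducible. Given `μ` with `(μ, αᵢ^∨) ≠ 0`,
minusculity gives `sᵢ μ - μ = -(μ, αᵢ^∨) αᵢ = ±αᵢ`, and every root is an integral combination of
the `αᵢ`. -/

noncomputable section

open scoped BigOperators

/-- `pr B x y` is the pairing `(x, y^∨) = 2(x,y)/(y,y)`. -/
def pr {E : Type} [AddCommGroup E] [Module ℚ E] (B : E →ₗ[ℚ] E →ₗ[ℚ] ℚ) (x y : E) : ℚ :=
  2 * B x y / B y y

/-- A reduced irreducible crystallographic root system `Φ` in a finite-dimensional ℚ-vector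
space `E` equipped with a positive definite symmetric bilinear form, together with a system of
simple roots `α i` (`i ∈ I`). -/
structure RootSystemCtx (E I : Type) [AddCommGroup E] [Module ℚ E] [Fintype I] : Type where
  B : E →ₗ[ℚ] E →ₗ[ℚ] ℚ
  Bsymm : ∀ x y, B x y = B y x
  Bpos : ∀ x, x ≠ 0 → 0 < B x x
  findim : FiniteDimensional ℚ E
  Φ : Set E
  Φfin : Φ.Finite
  zero_nmem : (0 : E) ∉ Φ
  reduced : ∀ a ∈ Φ, ∀ b ∈ Φ, b ≠ a → b ≠ -a → LinearIndependent ℚ ![a, b]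
  crystal : ∀ a ∈ Φ, ∀ b ∈ Φ, ∃ n : ℤ, pr B b a = (n : ℚ)
  reflect_mem : ∀ a ∈ Φ, ∀ b ∈ Φ, b - pr B b a • a ∈ Φ
  α : I → E
  α_mem : ∀ i, α i ∈ Φ
  α_indep : LinearIndependent ℚ α
  α_span : Submodule.span ℚ (Set.range α) = ⊤
  pos_neg : ∀ b ∈ Φ, (∃ cf : I → ℤ, (∀ i, 0 ≤ cf i) ∧ b = ∑ i, (cf i : ℚ) • α i) ∨
      (∃ cf : I → ℤ, (∀ i, cf i ≤ 0) ∧ b = ∑ i, (cf i : ℚ) • α i)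
  irred : ¬ ∃ Φ₁ Φ₂ : Set E, Φ₁.Nonempty ∧ Φ₂.Nonempty ∧ Φ₁ ∪ Φ₂ = Φ ∧
      ∀ a ∈ Φ₁, ∀ b ∈ Φ₂, B a b = 0

namespace RootSystemCtx

variable {E I : Type} [AddCommGroup E] [Module ℚ E] [Fintype I] (c : RootSystemCtx E I)

/-- The linear functional `(·, a^∨)`. -/
def coform (a : E) : Module.Dual ℚ E := (2 * (c.B a a)⁻¹) • (c.B.flip a)

lemma coform_apply (a x : E) : c.coform a x = pr c.B x a := by
  simp only [coform, LinearMap.smul_apply, LinearMap.flip_apply, smul_eq_mul, pr,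
    div_eq_mul_inv]
  ring

lemma coform_self {a : E} (ha : a ∈ c.Φ) : c.coform a a = 2 := by
  have h0 : a ≠ 0 := fun h => c.zero_nmem (h ▸ ha)
  have hB : c.B a a ≠ 0 := ne_of_gt (c.Bpos a h0)
  rw [coform_apply, pr]
  field_simp

/-- The simple reflection `s i : v ↦ v - (v, αᵢ^∨) αᵢ`. -/
def s (i : I) : E ≃ₗ[ℚ] E := Module.reflection (c.coform_self (c.α_mem i))

lemma s_apply (i : I) (v : E) : c.s i v = v - pr c.B v (c.α i) • c.α i := by
  rw [s, Module.reflection_apply, coform_apply]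

/-- The Weyl group, as a subgroup of the group of linear automorphisms of `E`. -/
def Weyl : Subgroup (E ≃ₗ[ℚ] E) := Subgroup.closure (Set.range c.s)

/-- `lam` is a minuscule (dominant) weight: a nonzero dominant weight (integral pairing
with every simple coroot) with `(lam, a^∨) ∈ {0, ±1}` for every root `a`. -/
def IsMinuscule (lam : E) : Prop :=
  lam ≠ 0 ∧ (∀ i, ∃ n : ℤ, pr c.B lam (c.α i) = (n : ℚ)) ∧ (∀ i, 0 ≤ pr c.B lam (c.α i)) ∧
    ∀ a ∈ c.Φ, pr c.B lam a = 0 ∨ pr c.B lam a = 1 ∨ pr c.B lam a = -1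

/-- `b` is a positive root. -/
def IsPos (b : E) : Prop :=
  b ∈ c.Φ ∧ ∃ cf : I → ℚ, (∀ i, 0 ≤ cf i) ∧ b = ∑ i, cf i • c.α i

end RootSystemCtx

/-- A nonempty union `Ψ` of Weyl group orbits of minuscule weights. -/
structure PsiData {E I : Type} [AddCommGroup E] [Module ℚ E] [Fintype I]
    (c : RootSystemCtx E I) : Type where
  Ψ : Set E
  nonempty : Ψ.Nonempty
  finite : Ψ.Finite
  orbit : ∀ μ ∈ Ψ, ∃ lam, c.IsMinuscule lam ∧ ∃ w ∈ c.Weyl, w lam = μ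
  stab : ∀ μ ∈ Ψ, ∀ w ∈ c.Weyl, w μ ∈ Ψ

/-- `nOp e f i t tinv` is the operator `(1 + t eᵢ)(1 - t⁻¹ fᵢ)(1 + t eᵢ)`, where `tinv`
is the inverse of `t`. -/
def nOp {I K M' : Type} [CommRing K] [AddCommGroup M'] [Module K M']
    (e f : I → Module.End K M') (i : I) (t tinv : K) : Module.End K M' :=
  (1 + t • e i) * (1 - tinv • f i) * (1 + t • e i)

/-- `hOp e f i t` is the operator `hᵢ(t) = nᵢ(t) nᵢ(-1)` for a unit `t`. -/
def hOp {I K M' : Type} [CommRing K] [AddCommGroup M'] [Module K M']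
    (e f : I → Module.End K M') (i : I) (t : Kˣ) : Module.End K M' :=
  nOp e f i (t : K) ((t⁻¹ : Kˣ) : K) * nOp e f i ((-1 : Kˣ) : K) (((-1 : Kˣ)⁻¹ : Kˣ) : K)

/-- Conjugation `n_{i₁} ⋯ n_{i_k} x n_{i_k}⁻¹ ⋯ n_{i₁}⁻¹` for a list `l = [i₁, …, i_k]`. -/
def conjOp {I M' : Type} [AddCommGroup M'] [Module ℂ M'] (nu : I → (Module.End ℂ M')ˣ)
    (x : Module.End ℂ M') (l : List I) : Module.End ℂ M' :=
  ↑((l.map nu).prod) * x * ↑(((l.map nu).prod)⁻¹)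

attribute [local instance 100] LieRing.ofAssociativeRing

/-- The Lie subalgebra of `𝔤𝔩(M)` generated by the `eᵢ` and `fᵢ`. -/
def genLie {I M' : Type} [AddCommGroup M'] [Module ℂ M'] (e f : I → Module.End ℂ M') :
    LieSubalgebra ℂ (Module.End ℂ M') :=
  LieSubalgebra.lieSpan ℂ (Module.End ℂ M') (Set.range e ∪ Set.range f)

/-- The root space `𝔤_a = {x ∈ 𝔤 ∣ [hⱼ, x] = (a, αⱼ^∨) x for all j}`, as a set. -/
def rootSet {E I M' : Type} [AddCommGroup E] [Module ℚ E] [Fintype I]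
    [AddCommGroup M'] [Module ℂ M'] (c : RootSystemCtx E I)
    (e f h : I → Module.End ℂ M') (a : E) : Set (Module.End ℂ M') :=
  {x | x ∈ genLie e f ∧ ∀ j, ⁅h j, x⁆ = ((pr c.B a (c.α j) : ℚ) : ℂ) • x}

/-- The root space `𝔤_a`, as a submodule of `𝔤𝔩(M)`. -/
def rootSp {E I M' : Type} [AddCommGroup E] [Module ℚ E] [Fintype I]
    [AddCommGroup M'] [Module ℂ M'] (c : RootSystemCtx E I)
    (e f h : I → Module.End ℂ M') (a : E) : Submodule ℂ (Module.End ℂ M') :=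
  (genLie e f).toSubmodule ⊓ ⨅ j : I,
    Module.End.eigenspace
      (LinearMap.mulLeft ℂ (h j) - LinearMap.mulRight ℂ (h j) : Module.End ℂ (Module.End ℂ M'))
      ((pr c.B a (c.α j) : ℚ) : ℂ)

/-- The diagonal subgroup `H` generated by all `hᵢ(t)`, `t ∈ Kˣ`. -/
def Hgroup {I K M' : Type} [CommRing K] [AddCommGroup M'] [Module K M']
    (e f : I → Module.End K M') : Subgroup (Module.End K M')ˣ :=
  Subgroup.closure {g | ∃ (i : I) (t : Kˣ), (g : Module.End K M') = hOp e f i t}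

/-- The monomial subgroup `N` generated by all `nᵢ(t)`, `t ∈ Kˣ`. -/
def Ngroup {I K M' : Type} [CommRing K] [AddCommGroup M'] [Module K M']
    (e f : I → Module.End K M') : Subgroup (Module.End K M')ˣ :=
  Subgroup.closure {g | ∃ (i : I) (t : Kˣ),
    (g : Module.End K M') = nOp e f i (t : K) ((t⁻¹ : Kˣ) : K)}

/-- The subgroup `U⁺` generated by all `x_γ(t) = 1 + t ē_γ` with `γ ∈ Φ⁺`. -/
def Uplus {E I K M' : Type} [AddCommGroup E] [Module ℚ E] [Fintype I]
    [CommRing K] [AddCommGroup M'] [Module K M'] (c : RootSystemCtx E I)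
    (eb : E → Module.End K M') : Subgroup (Module.End K M')ˣ :=
  Subgroup.closure {g | ∃ γ, c.IsPos γ ∧ ∃ t : K, (g : Module.End K M') = 1 + t • eb γ}

/-- The subgroup `U⁻` generated by all `x_γ(t) = 1 + t ē_γ` with `γ ∈ Φ⁻`. -/
def Uminus {E I K M' : Type} [AddCommGroup E] [Module ℚ E] [Fintype I]
    [CommRing K] [AddCommGroup M'] [Module K M'] (c : RootSystemCtx E I)
    (eb : E → Module.End K M') : Subgroup (Module.End K M')ˣ :=
  Subgroup.closure {g | ∃ γ, c.IsPos (-γ) ∧ ∃ t : K, (g : Module.End K M') = 1 + t • eb γ}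

/-- The subgroup `Uᵢ⁺` generated by all `x_γ(t)` with `γ ∈ Φ⁺`, `γ ≠ αᵢ`. -/
def UplusI {E I K M' : Type} [AddCommGroup E] [Module ℚ E] [Fintype I]
    [CommRing K] [AddCommGroup M'] [Module K M'] (c : RootSystemCtx E I)
    (eb : E → Module.End K M') (i : I) : Subgroup (Module.End K M')ˣ :=
  Subgroup.closure {g | ∃ γ, c.IsPos γ ∧ γ ≠ c.α i ∧ ∃ t : K, (g : Module.End K M') = 1 + t • eb γ}

namespace RootSystemCtx

open Module

variable {E I : Type} [AddCommGroup E] [Module ℚ E] [Fintype I] (c : RootSystemCtx E I)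

lemma ne_zero_of_mem {a : E} (ha : a ∈ c.Φ) : a ≠ 0 := fun h => c.zero_nmem (h ▸ ha)

lemma B_self_pos {a : E} (ha : a ∈ c.Φ) : 0 < c.B a a := c.Bpos a (c.ne_zero_of_mem ha)

lemma B_self_ne_zero {a : E} (ha : a ∈ c.Φ) : c.B a a ≠ 0 := (c.B_self_pos ha).ne'

lemma pr_self {a : E} (ha : a ∈ c.Φ) : pr c.B a a = 2 :=
  (c.coform_apply a a).symm.trans (c.coform_self ha)

lemma neg_mem {a : E} (ha : a ∈ c.Φ) : -a ∈ c.Φ := by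
  simpa [c.pr_self ha, two_smul] using c.reflect_mem a ha a ha

lemma pr_ne_zero_iff {x a : E} (ha : a ∈ c.Φ) : pr c.B x a ≠ 0 ↔ c.B x a ≠ 0 := by
  simp [pr, c.B_self_ne_zero ha]

lemma pr_s_apply (j : I) (x a : E) :
    pr c.B (c.s j x) a = pr c.B x a - pr c.B x (c.α j) * pr c.B (c.α j) a := by
  rw [s_apply, ← coform_apply, map_sub, map_smul, coform_apply, coform_apply, smul_eq_mul]

lemma B_s_apply (i : I) (x y : E) : c.B (c.s i x) (c.s i y) = c.B x y := by
  have hB := c.B_self_ne_zero (c.α_mem i)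
  simp only [s_apply, pr, map_sub, map_smul, LinearMap.sub_apply, LinearMap.smul_apply,
    smul_eq_mul, c.Bsymm (c.α i) y]
  field_simp
  ring

def autGroup : Subgroup (E ≃ₗ[ℚ] E) where
  carrier := {w | (∀ x y, c.B (w x) (w y) = c.B x y) ∧ ∀ b, w b ∈ c.Φ ↔ b ∈ c.Φ}
  one_mem' := ⟨fun _ _ => rfl, fun _ => Iff.rfl⟩
  mul_mem' := fun hw hv =>
    ⟨fun x y => (hw.1 _ _).trans (hv.1 x y), fun b => (hw.2 _).trans (hv.2 b)⟩
  inv_mem' := fun {w} hw => by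
    refine ⟨fun x y => ?_, fun b => ?_⟩
    · rw [← hw.1, show w (w⁻¹ x) = x from w.apply_symm_apply x,
        show w (w⁻¹ y) = y from w.apply_symm_apply y]
    · rw [← hw.2, show w (w⁻¹ b) = b from w.apply_symm_apply b]

lemma s_s_apply (i : I) (x : E) : c.s i (c.s i x) = x :=
  Module.involutive_reflection (c.coform_self (c.α_mem i)) x

lemma s_apply_mem_iff (i : I) (b : E) : c.s i b ∈ c.Φ ↔ b ∈ c.Φ := by
  have reflect : ∀ b ∈ c.Φ, c.s i b ∈ c.Φ := fun b hb => by
    rw [s_apply]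
    exact c.reflect_mem _ (c.α_mem i) b hb
  exact ⟨fun hb => c.s_s_apply i b ▸ reflect _ hb, reflect b⟩

lemma Weyl_le_autGroup : c.Weyl ≤ c.autGroup :=
  Subgroup.closure_le _ |>.2 <| Set.range_subset_iff.2 fun i => ⟨c.B_s_apply i, c.s_apply_mem_iff i⟩

lemma s_mem_Weyl (i : I) : c.s i ∈ c.Weyl := Subgroup.subset_closure ⟨i, rfl⟩

lemma pr_apply_apply {w : E ≃ₗ[ℚ] E} (hw : w ∈ c.autGroup) (x a : E) :
    pr c.B (w x) (w a) = pr c.B x a := by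
  simp only [pr, hw.1]


def basis : Basis I ℚ E := Basis.mk c.α_indep c.α_span.ge

lemma basis_apply (i : I) : c.basis i = c.α i := Basis.mk_apply _ _ i

lemma repr_sum_smul_α (g : I → ℚ) : c.basis.repr (∑ i, g i • c.α i) = g := by
  simp_rw [← c.basis_apply, c.basis.repr_sum_self]

lemma repr_α (i : I) : c.basis.repr (c.α i) = Finsupp.single i 1 := by
  rw [← c.basis_apply, Basis.repr_self]

lemma repr_nonneg_or_nonpos {b : E} (hb : b ∈ c.Φ) :
    (∀ i, 0 ≤ c.basis.repr b i) ∨ ∀ i, c.basis.repr b i ≤ 0 := by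
  rcases c.pos_neg b hb with ⟨cf, hcf, rfl⟩ | ⟨cf, hcf, rfl⟩
  · exact .inl fun i => by rw [c.repr_sum_smul_α]; exact_mod_cast hcf i
  · exact .inr fun i => by rw [c.repr_sum_smul_α]; exact_mod_cast hcf i

lemma eq_zero_of_B_α_eq_zero {x : E} (h : ∀ i, c.B x (c.α i) = 0) : x = 0 := by
  by_contra hx
  have hBx : c.B x = 0 := c.basis.ext fun i => by simp [basis_apply, h]
  exact (c.Bpos x hx).ne' (by rw [hBx, LinearMap.zero_apply])

def height (x : E) : ℚ := ∑ i, c.basis.repr x i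

def Straddles (p : I → Prop) (x : E) : Prop :=
  (∃ i, p i ∧ c.basis.repr x i ≠ 0) ∧ ∃ j, ¬ p j ∧ c.basis.repr x j ≠ 0

def SplitsOrthogonally (p : I → Prop) : Prop := ∀ i j, p i → ¬ p j → c.B (c.α i) (c.α j) = 0

variable {c} {p : I → Prop}

lemma B_eq_zero_of_repr (hortho : c.SplitsOrthogonally p) {x y : E}
    (hx : ∀ i, ¬ p i → c.basis.repr x i = 0) (hy : ∀ j, p j → c.basis.repr y j = 0) :
    c.B x y = 0 := by
  rw [← c.basis.sum_repr x, ← c.basis.sum_repr y]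
  simp only [map_sum, map_smul, LinearMap.sum_apply, LinearMap.smul_apply, smul_eq_mul,
    c.basis_apply, Finset.mul_sum]
  refine Finset.sum_eq_zero fun j _ => Finset.sum_eq_zero fun i _ => ?_
  by_cases hi : p i
  · by_cases hj : p j
    · simp [hy j hj]
    · simp [hortho i j hi hj]
  · simp [hx i hi]

lemma exists_B_α_pos_of_repr_nonneg (hortho : c.SplitsOrthogonally p)
    {b : E} (hnonneg : ∀ i, 0 ≤ c.basis.repr b i) {j : I} (hj : ¬ p j)
    (hbj : c.basis.repr b j ≠ 0) : ∃ t, ¬ p t ∧ 0 < c.B b (c.α t) := by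
  classical
  -- `y` is the component of `b` outside `p`, so `(b, y) = (y, y) > 0`.
  set g : I → ℚ := fun i => if p i then 0 else c.basis.repr b i
  set y : E := ∑ i, g i • c.α i
  have hy : c.basis.repr y = g := c.repr_sum_smul_α g
  have hy0 : y ≠ 0 := fun h => hbj (by simpa [g, hj, h, eq_comm] using congrFun hy j)
  have hby : c.B b y = c.B y y := by
    have : c.B (b - y) y = 0 := B_eq_zero_of_repr hortho
      (fun i hi => by simp [hy, g, hi]) (fun i hi => by simp [hy, g, hi])
    rwa [map_sub, LinearMap.sub_apply, sub_eq_zero] at this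
  by_contra! hle
  have : c.B b y ≤ 0 := by
    simp only [y, map_sum, map_smul, smul_eq_mul]
    refine Finset.sum_nonpos fun i _ => ?_
    by_cases hi : p i
    · simp [g, hi]
    · exact mul_nonpos_of_nonneg_of_nonpos (by simpa [g, hi] using hnonneg i) (hle i hi)
  exact (c.Bpos y hy0).not_ge (hby ▸ this)

lemma repr_s_apply_of_ne {t i : I} (hit : i ≠ t) (x : E) :
    c.basis.repr (c.s t x) i = c.basis.repr x i := by
  simp [s_apply, repr_α, hit.symm]

lemma height_s_apply (t : I) (x : E) :
    c.height (c.s t x) = c.height x - pr c.B x (c.α t) := by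
  simp [height, s_apply, repr_α, Finset.sum_sub_distrib]

/-- Reflect in a simple root `αₜ` outside `p` with `(b, αₜ) > 0`. -/
lemma exists_straddles_height_lt (hortho : c.SplitsOrthogonally p)
    {b : E} (hb : b ∈ c.Φ) (hnonneg : ∀ i, 0 ≤ c.basis.repr b i) (hbp : c.Straddles p b) :
    ∃ b' ∈ c.Φ, (∀ i, 0 ≤ c.basis.repr b' i) ∧ c.Straddles p b' ∧ c.height b' < c.height b := by
  obtain ⟨⟨i, hi, hbi⟩, j, hj, hbj⟩ := hbp
  obtain ⟨t, ht, hBt⟩ := exists_B_α_pos_of_repr_nonneg hortho hnonneg hj hbj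
  have hm : 0 < pr c.B b (c.α t) := div_pos (by linarith) (c.B_self_pos (c.α_mem t))
  have hb' : c.s t b ∈ c.Φ := (c.s_apply_mem_iff t b).2 hb
  have hrepr : ∀ k, p k → c.basis.repr (c.s t b) k = c.basis.repr b k :=
    fun k hk => c.repr_s_apply_of_ne (fun h : k = t => ht (h ▸ hk)) b
  refine ⟨c.s t b, hb', ?_, ⟨⟨i, hi, hrepr i hi ▸ hbi⟩, ?_⟩, by rw [height_s_apply]; linarith⟩
  · refine (c.repr_nonneg_or_nonpos hb').resolve_right fun hneg => hbi ?_
    exact le_antisymm (hrepr i hi ▸ hneg i) (hnonneg i)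
  · by_contra! hsupp
    have hB : c.B (c.s t b) (c.α t) = 0 := B_eq_zero_of_repr hortho hsupp fun k hk => by
      rw [repr_α, Finsupp.single_eq_of_ne fun h : k = t => ht (h ▸ hk)]
    have hpr : pr c.B (c.s t b) (c.α t) = -pr c.B b (c.α t) := by
      rw [pr_s_apply, c.pr_self (c.α_mem t)]
      ring
    exact (c.pr_ne_zero_iff (c.α_mem t)).1 (by rw [hpr]; exact neg_ne_zero.2 hm.ne') hB

lemma not_straddles (hortho : c.SplitsOrthogonally p)
    {b : E} (hb : b ∈ c.Φ) : ¬ c.Straddles p b := by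
  have hpos : ∀ b ∈ c.Φ, (∀ i, 0 ≤ c.basis.repr b i) → ¬ c.Straddles p b := by
    intro b hb hnonneg hbp
    obtain ⟨b₀, ⟨hb₀, hnonneg₀, hb₀p⟩, hmin⟩ :=
      Set.exists_min_image {b | b ∈ c.Φ ∧ (∀ i, 0 ≤ c.basis.repr b i) ∧ c.Straddles p b}
        c.height (c.Φfin.subset fun _ h => h.1) ⟨b, hb, hnonneg, hbp⟩
    obtain ⟨b', hb', hnonneg', hb'p, hlt⟩ :=
      exists_straddles_height_lt hortho hb₀ hnonneg₀ hb₀p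
    exact (hmin b' ⟨hb', hnonneg', hb'p⟩).not_gt hlt
  rcases c.repr_nonneg_or_nonpos hb with hnonneg | hnonpos
  · exact hpos b hb hnonneg
  · have hneg : c.Straddles p (-b) ↔ c.Straddles p b := by simp [Straddles]
    exact hneg.not.1 <| hpos (-b) (c.neg_mem hb) fun i => by simpa using hnonpos i

variable (c) in
lemma exists_B_α_ne_zero (p : I → Prop) (hp : ∃ i, p i) (hnp : ∃ j, ¬ p j) :
    ∃ i j, p i ∧ ¬ p j ∧ c.B (c.α i) (c.α j) ≠ 0 := by
  by_contra! hortho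
  obtain ⟨i, hi⟩ := hp
  obtain ⟨j, hj⟩ := hnp
  refine c.irred ⟨{b ∈ c.Φ | ∀ k, ¬ p k → c.basis.repr b k = 0},
    {b ∈ c.Φ | ∀ k, p k → c.basis.repr b k = 0}, ⟨c.α i, c.α_mem i, fun k hk => ?_⟩,
    ⟨c.α j, c.α_mem j, fun k hk => ?_⟩, ?_, fun a ha b hb => B_eq_zero_of_repr hortho ha.2 hb.2⟩
  · rw [repr_α, Finsupp.single_eq_of_ne fun h : k = i => hk (h ▸ hi)]
  · rw [repr_α, Finsupp.single_eq_of_ne fun h : k = j => hj (h ▸ hk)]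
  · refine Set.Subset.antisymm (Set.union_subset (fun _ h => h.1) fun _ h => h.1) fun b hb => ?_
    rcases not_and_or.1 (not_straddles hortho hb) with h | h <;> push Not at h
    · exact .inr ⟨hb, h⟩
    · exact .inl ⟨hb, h⟩

lemma Φ_subset_closure_range_α : c.Φ ⊆ AddSubgroup.closure (Set.range c.α) := by
  intro b hb
  obtain ⟨cf, -, rfl⟩ | ⟨cf, -, rfl⟩ := c.pos_neg b hb <;>
  exact AddSubgroup.sum_mem _ fun i _ => by
    rw [Int.cast_smul_eq_zsmul]
    exact zsmul_mem (AddSubgroup.subset_closure (Set.mem_range_self i)) _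

end RootSystemCtx

namespace PsiData

variable {E I : Type} [AddCommGroup E] [Module ℚ E] [Fintype I] {c : RootSystemCtx E I}
  (P : PsiData c)

lemma ne_zero {μ : E} (hμ : μ ∈ P.Ψ) : μ ≠ 0 := by
  obtain ⟨lam, hlam, w, -, rfl⟩ := P.orbit μ hμ
  exact (map_ne_zero_iff w w.injective).2 hlam.1

lemma pr_eq_zero_or_eq_one_or_eq_neg_one {μ a : E} (hμ : μ ∈ P.Ψ) (ha : a ∈ c.Φ) :
    pr c.B μ a = 0 ∨ pr c.B μ a = 1 ∨ pr c.B μ a = -1 := by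
  obtain ⟨lam, hlam, w, hw, rfl⟩ := P.orbit μ hμ
  have hw := c.Weyl_le_autGroup hw
  rw [← w.apply_symm_apply a, c.pr_apply_apply hw]
  exact hlam.2.2.2 _ ((hw.2 _).1 (by rwa [w.apply_symm_apply]))

lemma s_apply_mem (i : I) {μ : E} (hμ : μ ∈ P.Ψ) : c.s i μ ∈ P.Ψ :=
  P.stab μ hμ _ (c.s_mem_Weyl i)

lemma s_apply_sub_self {i : I} {μ : E} (hμ : μ ∈ P.Ψ) (hne : pr c.B μ (c.α i) ≠ 0) :
    c.s i μ - μ = c.α i ∨ c.s i μ - μ = -c.α i := by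
  have hdiff : c.s i μ - μ = -(pr c.B μ (c.α i) • c.α i) := by
    rw [c.s_apply]
    abel
  rcases P.pr_eq_zero_or_eq_one_or_eq_neg_one hμ (c.α_mem i) with h | h | h
  · exact absurd h hne
  · exact .inr (by rw [hdiff, h, one_smul])
  · exact .inl (by rw [hdiff, h, neg_one_smul, neg_neg])

lemma s_apply_sub_self_mem_closure (i : I) {μ : E} (hμ : μ ∈ P.Ψ) :
    c.s i μ - μ ∈ AddSubgroup.closure P.Ψ :=
  sub_mem (AddSubgroup.subset_closure (P.s_apply_mem i hμ)) (AddSubgroup.subset_closure hμ)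


lemma exists_mem_pr_ne_zero (i : I) : ∃ μ ∈ P.Ψ, pr c.B μ (c.α i) ≠ 0 := by
  by_contra! hi
  set p : I → Prop := fun k => ∀ μ ∈ P.Ψ, pr c.B μ (c.α k) = 0
  have hnp : ∃ j, ¬ p j := by
    obtain ⟨μ, hμ⟩ := P.nonempty
    by_contra! hall
    refine P.ne_zero hμ (c.eq_zero_of_B_α_eq_zero fun k => ?_)
    exact not_not.1 fun h => (c.pr_ne_zero_iff (c.α_mem k)).2 h (hall k μ hμ)
  obtain ⟨k, j, hk, hj, hB⟩ := c.exists_B_α_ne_zero p ⟨i, hi⟩ hnp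
  obtain ⟨μ, hμ, hμj⟩ : ∃ μ ∈ P.Ψ, pr c.B μ (c.α j) ≠ 0 := by simpa [p] using hj
  have hsμ := hk _ (P.s_apply_mem j hμ)
  rw [c.pr_s_apply, hk μ hμ, zero_sub, neg_eq_zero] at hsμ
  exact mul_ne_zero hμj ((c.pr_ne_zero_iff (c.α_mem k)).2 (by rwa [c.Bsymm])) hsμ

lemma α_mem_closure (i : I) : c.α i ∈ AddSubgroup.closure P.Ψ := by
  obtain ⟨μ, hμ, hne⟩ := P.exists_mem_pr_ne_zero i
  have hmem := P.s_apply_sub_self_mem_closure i hμ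
  rcases P.s_apply_sub_self hμ hne with h | h
  · rwa [h] at hmem
  · rwa [h, neg_mem_iff] at hmem

lemma Φ_subset_closure : c.Φ ⊆ AddSubgroup.closure P.Ψ :=
  c.Φ_subset_closure_range_α.trans <| AddSubgroup.closure_le _ |>.2 <|
    Set.range_subset_iff.2 P.α_mem_closure

end PsiData

/-- Lemma 2.3: for each i there is μ ∈ Ψ pairing nontrivially with αᵢ^∨; for such μ,
sᵢ(μ) - μ = ±αᵢ lies in ℤΨ, and consequently Φ ⊆ ℤΨ. -/
theorem stmt_0 {E I : Type} [AddCommGroup E] [Module ℚ E] [Fintype I]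
    (c : RootSystemCtx E I) (P : PsiData c)
    :
    (∀ i : I, ∃ μ ∈ P.Ψ, pr c.B μ (c.α i) ≠ 0) ∧
    (∀ i : I, ∀ μ ∈ P.Ψ, pr c.B μ (c.α i) ≠ 0 →
      (c.s i μ - μ = c.α i ∨ c.s i μ - μ = -c.α i) ∧
      c.s i μ - μ ∈ AddSubgroup.closure P.Ψ) ∧
    c.Φ ⊆ (AddSubgroup.closure P.Ψ : Set E) :=
  ⟨P.exists_mem_pr_ne_zero, fun i _ hμ hne =>
    ⟨P.s_apply_sub_self hμ hne, P.s_apply_sub_self_mem_closure i hμ⟩, P.Φ_subset_closure⟩
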